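/- arXiv:1602.06735 — 2 statements merged into one kernel-verified Lean document; each statement's English description precedes it below -/
import Mathlib

section
/- Let S be a p-scheme of order p^3 whose thin residue O^θ(S) is isomorphic (as a group of thin relations) to C_p × C_p. Then S is commutative if and only if O^θ(S)s = {s} for every s ∈ S ∖ O^θ(S) (i.e., the complex product of the thin residue with any relation outside it is that single relation). -/
open Set

/-- The diagonal relation `1_X` on a set `X`. -/
def schemeDiag (X : Type*) : Set (X × X) := {p | p.1 = p.2}

/-- The transpose `s*` of a relation `s`. -/
def schemeTransp {X : Type*} (s : Set (X × X)) : Set (X × X) := {p | (p.2, p.1) ∈ s}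

/-- An association scheme on a finite set `X`: a partition of `X × X` containing the
diagonal, closed under transposition, with well-defined intersection numbers `a s t u`. -/
structure AssocScheme (X : Type*) [Fintype X] where
  rels : Set (Set (X × X))
  partition : ∀ p : X × X, ∃! s, s ∈ rels ∧ p ∈ s
  diag_mem : schemeDiag X ∈ rels
  transpose_mem : ∀ s ∈ rels, schemeTransp s ∈ rels
  a : Set (X × X) → Set (X × X) → Set (X × X) → ℕ
  a_spec : ∀ s ∈ rels, ∀ t ∈ rels, ∀ u ∈ rels, ∀ x y : X, (x, y) ∈ u →
    a s t u = Nat.card {z : X | (x, z) ∈ s ∧ (z, y) ∈ t}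

namespace AssocScheme

variable {X : Type*} [Fintype X] (S : AssocScheme X)

/-- The valency `n_s = a_{s s* 1_X}` of a relation. -/
def val (s : Set (X × X)) : ℕ := S.a s (schemeTransp s) (schemeDiag X)

/-- The complex product `uv` of two relations. -/
def cprod (u v : Set (X × X)) : Set (Set (X × X)) := {s ∈ S.rels | S.a u v s ≠ 0}

/-- The complex product `PQ` of two sets of relations. -/
def sprod (P Q : Set (Set (X × X))) : Set (Set (X × X)) :=
  {s ∈ S.rels | ∃ p ∈ P, ∃ q ∈ Q, S.a p q s ≠ 0}

/-- A (nonempty) closed subset of the scheme. -/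
def IsClosedSubset (T : Set (Set (X × X))) : Prop :=
  T.Nonempty ∧ T ⊆ S.rels ∧ ∀ u ∈ T, ∀ v ∈ T, S.cprod u v ⊆ T

/-- The thin radical `O_θ(S)`: the set of relations of valency 1. -/
def thinRadical : Set (Set (X × X)) := {s ∈ S.rels | S.val s = 1}

/-- The smallest closed subset containing all `t* t` for `t ∈ T`. -/
def resOf (T : Set (Set (X × X))) : Set (Set (X × X)) :=
  ⋂₀ {U | S.IsClosedSubset U ∧ ∀ t ∈ T, S.cprod (schemeTransp t) t ⊆ U}

/-- The thin residue `O^θ(S) = ⟨⋃_{s ∈ S} s* s⟩`. -/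
def thinResidue : Set (Set (X × X)) := S.resOf S.rels

/-- The order `n_U = ∑_{u ∈ U} n_u` of a set of relations. -/
noncomputable def nOrd (U : Set (Set (X × X))) : ℕ := ∑ᶠ u ∈ U, S.val u

/-- Commutativity of the scheme. -/
def IsCommutative : Prop :=
  ∀ u ∈ S.rels, ∀ v ∈ S.rels, ∀ w ∈ S.rels, S.a u v w = S.a v u w

/-- `S` is a `p`-scheme: `|X|` and all valencies are powers of the prime `p`. -/
def IsPScheme (p : ℕ) : Prop :=
  p.Prime ∧ (∃ n, Fintype.card X = p ^ n) ∧ ∀ s ∈ S.rels, ∃ i, S.val s = p ^ i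

/-- `S` is schurian: its relations are the orbitals of a transitive permutation group. -/
def IsSchurian : Prop :=
  ∃ G : Subgroup (Equiv.Perm X), (∀ x y : X, ∃ g ∈ G, g x = y) ∧
    S.rels = {o | ∃ q : X × X, o = {r : X × X | ∃ g ∈ G, (g q.1, g q.2) = r}}

/-- The right stabilizer `R(s) = {t | st = s}`. -/
def Rstab (s : Set (X × X)) : Set (Set (X × X)) := {t ∈ S.rels | S.cprod s t = {s}}

/-- The left stabilizer `L(s) = {t | ts = s}`. -/
def Lstab (s : Set (X × X)) : Set (Set (X × X)) := {t ∈ S.rels | S.cprod t s = {s}}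

/-- A faithful map: `r(x,y) = r(φ x, φ y)` for all `x, y`. -/
def IsFaithful (φ : X → X) : Prop :=
  ∀ x y : X, ∀ s ∈ S.rels, (x, y) ∈ s → (φ x, φ y) ∈ s

/-- An automorphism of the scheme. -/
def IsAutomorphism (φ : X → X) : Prop := Function.Bijective φ ∧ S.IsFaithful φ

/-- The quotient scheme `S // T` is isomorphic to the cyclic group `C_m`:
there is a surjection `f : X → ZMod m` whose difference map classifies the
double-coset relations `T s T`. -/
def QuotIsoCyclic (T : Set (Set (X × X))) (m : ℕ) : Prop :=
  ∃ f : X → ZMod m, Function.Surjective f ∧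
    ∀ x y x' y' : X, (f y - f x = f y' - f x') ↔
      ∃ s ∈ S.rels, (x, y) ∈ s ∧ ∃ s' ∈ S.sprod (S.sprod T {s}) T, (x', y') ∈ s'

/-- A thin closed subset `T` is isomorphic, as a group under the relational
product, to the additive group `G`. -/
def ThinGroupIso (T : Set (Set (X × X))) (G : Type*) [AddGroup G] : Prop :=
  (∀ t ∈ T, S.val t = 1) ∧ ∃ f : Set (X × X) → G, Set.BijOn f T Set.univ ∧
    ∀ t1 ∈ T, ∀ t2 ∈ T, ∀ u, S.cprod t1 t2 = {u} → f u = f t1 + f t2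

end AssocScheme

/-- The set of relations of the wreath product `F ≀ H`. -/
def wreathRels {W Y : Type*} [Fintype W] [Fintype Y]
    (F : AssocScheme W) (H : AssocScheme Y) : Set (Set ((W × Y) × (W × Y))) :=
  {r | ∃ f ∈ F.rels, r = {p : (W × Y) × (W × Y) | p.1.2 = p.2.2 ∧ (p.1.1, p.2.1) ∈ f}} ∪
  {r | ∃ h ∈ H.rels, h ≠ schemeDiag Y ∧
    r = {p : (W × Y) × (W × Y) | (p.1.2, p.2.2) ∈ h}}

/-!
Write `T = O^θ(S)`. Composing with a thin relation maps relations to relations, so `T` is a group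
of order `p²` acting on `S` from both sides, and `X` splits into `p` blocks `xT` of size `p²`.

(⇒) Let `S` be commutative and `s ∉ T`. The relations `w` with `w* w ⊆ {t ∈ T | s t = s}` form a
closed subset (commutativity gives `(uv)*(uv) ⊆ (u* u)(v* v)`) containing `T` and `s`. Its order
divides `p³` and exceeds `p²`, so it is all of `S`; hence the closed subset `{t ∈ T | s t = s}`
contains every `w* w` and equals `T`, and `T s = s T = {s}`.

(⇐) If `T s = {s}` for all `s ∉ T`, each such `s` is a union of products of blocks, so every
relation induces a map on the `p` blocks. These maps are closed under composition and act
sharply transitively: they form a regular permutation group of prime degree `p`, which is cyclic.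
Hence `u v = v u` for all relations (for thin ones because `T` is abelian), and
`a_{uvw} = min(n_u, n_v) [(x, y) ∈ u ○ v]` is symmetric in `u` and `v`.
-/

open scoped SetRel

lemma Nat.card_setOf_eq_sum_ite {α : Type*} [Fintype α] (P : α → Prop) [DecidablePred P] :
    Nat.card {a | P a} = ∑ a, if P a then 1 else 0 := by
  rw [Nat.card_eq_fintype_card, ← Set.toFinset_card, Set.toFinset_ofPred, Finset.card_filter]

theorem Setoid.card_eq_card_quotient_mul {α : Type*} [Finite α] (r : Setoid α) {n : ℕ}
    (h : ∀ a, Nat.card {b | r a b} = n) : Nat.card α = Nat.card (Quotient r) * n := by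
  have : Fintype α := Fintype.ofFinite α
  classical
  rw [← Nat.card_congr (Equiv.sigmaFiberEquiv (Quotient.mk r)), Nat.card_sigma,
    Finset.sum_congr rfl fun q _ => ?_, Finset.sum_const, Finset.card_univ, smul_eq_mul,
    Nat.card_eq_fintype_card]
  induction q using Quotient.inductionOn with
  | h a =>
    rw [← h a]
    exact Nat.card_congr (Equiv.subtypeEquivRight fun b => Quotient.eq.trans ⟨r.symm, r.symm⟩)

/-- The maps in `G` are bijections forming a subgroup of `Equiv.Perm Q` in bijection with `Q`,
and a group of prime order is cyclic. -/
theorem comp_comm_of_regular_of_prime_card {Q : Type*} [Finite Q] (hQ : (Nat.card Q).Prime)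
    {G : Set (Q → Q)} (hid : id ∈ G) (hcomp : ∀ f ∈ G, ∀ g ∈ G, f ∘ g ∈ G)
    (hreg : ∀ a b : Q, ∃! g, g ∈ G ∧ g a = b) {f g : Q → Q} (hf : f ∈ G) (hg : g ∈ G) :
    f ∘ g = g ∘ f := by
  obtain ⟨a⟩ : Nonempty Q := (Nat.card_pos_iff.mp hQ.pos).1
  have hinv : ∀ f ∈ G, ∃ h ∈ G, h ∘ f = id := fun f hf =>
    let ⟨h, hh, hha⟩ := (hreg (f a) a).exists
    ⟨h, hh, (hreg a a).unique ⟨hcomp h hh f hf, hha⟩ ⟨hid, rfl⟩⟩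
  have hbij : ∀ f ∈ G, f.Bijective := fun f hf =>
    let ⟨_, _, hh⟩ := hinv f hf
    Finite.injective_iff_bijective.mp (Function.LeftInverse.injective (congrFun hh))
  let H : Subgroup (Equiv.Perm Q) :=
    { carrier := {σ | ⇑σ ∈ G}
      mul_mem' := fun hσ hτ => hcomp _ hσ _ hτ
      one_mem' := hid
      inv_mem' := fun {σ} hσ => by
        obtain ⟨h, hh, hhσ⟩ := hinv σ hσ
        have : h = ⇑σ⁻¹ := by
          funext x
          simpa using congrFun hhσ (σ⁻¹ x)
        exact (this ▸ hh : ⇑σ⁻¹ ∈ G) }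
  have hcard : Nat.card H = Nat.card Q := by
    refine Nat.card_congr (Equiv.ofBijective (fun σ : H => (σ : Equiv.Perm Q) a) ⟨?_, ?_⟩)
    · intro σ τ hστ
      exact Subtype.ext (Equiv.coe_fn_injective ((hreg a _).unique ⟨σ.2, rfl⟩ ⟨τ.2, hστ.symm⟩))
    · intro b
      obtain ⟨h, hh, hhb⟩ := (hreg a b).exists
      exact ⟨⟨Equiv.ofBijective h (hbij h hh), hh⟩, hhb⟩
  have : Fact (Nat.card Q).Prime := ⟨hQ⟩
  have : IsCyclic H := isCyclic_of_prime_card hcard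
  have := IsCyclic.commGroup.mul_comm (⟨Equiv.ofBijective f (hbij f hf), hf⟩ : H)
    ⟨Equiv.ofBijective g (hbij g hg), hg⟩
  exact congrArg (fun σ : H => ⇑(σ : Equiv.Perm Q)) this

namespace AssocScheme

lemma schemeTransp_eq_inv {X : Type*} (s : Set (X × X)) : schemeTransp s = SetRel.inv s := rfl

lemma schemeDiag_eq_id {X : Type*} : schemeDiag X = SetRel.id := rfl

variable {X : Type*} [Fintype X] {S : AssocScheme X} {s t u v r : Set (X × X)} {x y : X}
  {U : Set (Set (X × X))}

lemma transp_mem_rels_iff : schemeTransp s ∈ S.rels ↔ s ∈ S.rels :=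
  ⟨S.transpose_mem _, S.transpose_mem s⟩

noncomputable def relOf (S : AssocScheme X) (q : X × X) : Set (X × X) :=
  (S.partition q).exists.choose

lemma relOf_mem_rels (q : X × X) : S.relOf q ∈ S.rels :=
  (S.partition q).exists.choose_spec.1

lemma mem_relOf (q : X × X) : q ∈ S.relOf q :=
  (S.partition q).exists.choose_spec.2

lemma relOf_eq {q : X × X} (hs : s ∈ S.rels) (hq : q ∈ s) : S.relOf q = s :=
  (S.partition q).unique ⟨relOf_mem_rels q, mem_relOf q⟩ ⟨hs, hq⟩

lemma relOf_eq_iff {q : X × X} (hs : s ∈ S.rels) : S.relOf q = s ↔ q ∈ s :=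
  ⟨fun h => h ▸ mem_relOf q, relOf_eq hs⟩

lemma eq_of_mem_of_mem {q : X × X} (hs : s ∈ S.rels) (ht : t ∈ S.rels) (hqs : q ∈ s)
    (hqt : q ∈ t) : s = t :=
  (relOf_eq hs hqs).symm.trans (relOf_eq ht hqt)

lemma relOf_swap (x y : X) : S.relOf (y, x) = schemeTransp (S.relOf (x, y)) :=
  relOf_eq (S.transpose_mem _ (relOf_mem_rels _)) (mem_relOf (x, y))

lemma a_eq_card (hs : s ∈ S.rels) (ht : t ∈ S.rels) (hu : u ∈ S.rels) (hxy : (x, y) ∈ u) :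
    S.a s t u = Nat.card {z | (x, z) ∈ s ∧ (z, y) ∈ t} :=
  S.a_spec s hs t ht u hu x y hxy

lemma a_ne_zero_iff (hs : s ∈ S.rels) (ht : t ∈ S.rels) (hu : u ∈ S.rels) (hxy : (x, y) ∈ u) :
    S.a s t u ≠ 0 ↔ (x, y) ∈ s ○ t := by
  rw [a_eq_card hs ht hu hxy, Nat.card_ne_zero, nonempty_subtype, and_iff_left Subtype.finite]
  rfl

lemma val_eq_card (hs : s ∈ S.rels) (x : X) : S.val s = Nat.card {y | (x, y) ∈ s} := by
  rw [val, a_eq_card hs (S.transpose_mem s hs) S.diag_mem (show (x, x) ∈ schemeDiag X from rfl)]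
  congr 2 with y
  exact and_iff_left_of_imp id

lemma val_pos_of_isPScheme {p : ℕ} (hp : S.IsPScheme p) (hs : s ∈ S.rels) : 0 < S.val s := by
  obtain ⟨i, hi⟩ := hp.2.2 s hs
  exact hi ▸ pow_pos hp.1.pos i

lemma val_transp [Nonempty X] (hs : s ∈ S.rels) : S.val (schemeTransp s) = S.val s := by
  classical
  have hrow (x : X) : S.val s = ∑ y, if (x, y) ∈ s then 1 else 0 := by
    rw [val_eq_card hs x, Nat.card_setOf_eq_sum_ite]
  have hcol (y : X) : S.val (schemeTransp s) = ∑ x, if (x, y) ∈ s then 1 else 0 := by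
    rw [val_eq_card (S.transpose_mem s hs) y, Nat.card_setOf_eq_sum_ite]
    rfl
  have h := Finset.sum_comm (s := Finset.univ) (t := Finset.univ)
    (f := fun x y => if (x, y) ∈ s then 1 else 0)
  simp only [← hrow, ← hcol, Finset.sum_const, Finset.card_univ, smul_eq_mul] at h
  exact (Nat.eq_of_mul_eq_mul_left Fintype.card_pos h).symm

lemma a_le_val_left (hs : s ∈ S.rels) (ht : t ∈ S.rels) (hu : u ∈ S.rels) (hxy : (x, y) ∈ u) :
    S.a s t u ≤ S.val s := by
  rw [a_eq_card hs ht hu hxy, val_eq_card hs x]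
  exact Nat.card_mono (Set.toFinite _) fun _ h => h.1

lemma a_le_val_right [Nonempty X] (hs : s ∈ S.rels) (ht : t ∈ S.rels) (hu : u ∈ S.rels)
    (hxy : (x, y) ∈ u) : S.a s t u ≤ S.val t := by
  rw [a_eq_card hs ht hu hxy, ← val_transp ht, val_eq_card (S.transpose_mem t ht) y]
  exact Nat.card_mono (Set.toFinite _) fun _ h => h.2

lemma subset_comp_of_mem_cprod (hs : s ∈ S.rels) (ht : t ∈ S.rels) (hr : r ∈ S.cprod s t) :
    r ⊆ s ○ t :=
  fun ⟨_, _⟩ hq => (a_ne_zero_iff hs ht hr.1 hq).mp hr.2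

lemma mem_cprod_of_mem_comp (hs : s ∈ S.rels) (ht : t ∈ S.rels) (hr : r ∈ S.rels)
    (hxy : (x, y) ∈ r) (hst : (x, y) ∈ s ○ t) : r ∈ S.cprod s t :=
  ⟨hr, (a_ne_zero_iff hs ht hr hxy).mpr hst⟩

lemma relOf_mem_cprod (hs : s ∈ S.rels) (ht : t ∈ S.rels) (hst : (x, y) ∈ s ○ t) :
    S.relOf (x, y) ∈ S.cprod s t :=
  mem_cprod_of_mem_comp hs ht (relOf_mem_rels _) (mem_relOf _) hst

lemma subset_comp_of_mem_comp (hs : s ∈ S.rels) (ht : t ∈ S.rels) (hr : r ∈ S.rels)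
    (hxy : (x, y) ∈ r) (hst : (x, y) ∈ s ○ t) : r ⊆ s ○ t :=
  subset_comp_of_mem_cprod hs ht (mem_cprod_of_mem_comp hs ht hr hxy hst)

lemma right_unique_of_val_eq_one {y' : X} (ht : t ∈ S.rels) (ht1 : S.val t = 1)
    (h : (x, y) ∈ t) (h' : (x, y') ∈ t) : y = y' := by
  rw [val_eq_card ht x, Nat.card_eq_one_iff_unique] at ht1
  exact congrArg Subtype.val (ht1.1.elim ⟨y, h⟩ ⟨y', h'⟩)

section NonemptyRels

variable (hpos : ∀ s ∈ S.rels, 0 < S.val s)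
include hpos

lemma exists_mem_right (hs : s ∈ S.rels) (x : X) : ∃ y, (x, y) ∈ s := by
  have := hpos s hs
  rw [val_eq_card hs x, Nat.card_pos_iff] at this
  exact nonempty_subtype.mp this.1

lemma exists_mem_left (hs : s ∈ S.rels) (y : X) : ∃ x, (x, y) ∈ s :=
  exists_mem_right hpos (S.transpose_mem s hs) y

lemma transp_comp_self_of_val_eq_one (ht : t ∈ S.rels) (ht1 : S.val t = 1) :
    schemeTransp t ○ t = schemeDiag X := by
  ext ⟨x, y⟩
  refine ⟨fun ⟨z, hzx, hzy⟩ => right_unique_of_val_eq_one ht ht1 hzx hzy, ?_⟩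
  rintro (rfl : x = y)
  obtain ⟨z, hz⟩ := exists_mem_left hpos ht x
  exact ⟨z, hz, hz⟩

variable [Nonempty X]

lemma nonempty_of_mem_rels (hs : s ∈ S.rels) : s.Nonempty :=
  let ⟨_, hy⟩ := exists_mem_right hpos hs (Classical.arbitrary X)
  ⟨_, hy⟩

lemma cprod_eq_singleton_comp (hs : s ∈ S.rels) (ht : t ∈ S.rels) (hst : s ○ t ∈ S.rels) :
    S.cprod s t = {s ○ t} := by
  refine Set.eq_singleton_iff_unique_mem.mpr ⟨?_, fun r hr => ?_⟩
  · obtain ⟨⟨x, y⟩, hxy⟩ := nonempty_of_mem_rels hpos hst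
    exact mem_cprod_of_mem_comp hs ht hst hxy hxy
  · obtain ⟨q, hq⟩ := nonempty_of_mem_rels hpos hr.1
    exact eq_of_mem_of_mem hr.1 hst hq (subset_comp_of_mem_cprod hs ht hr hq)

lemma cprod_nonempty (hs : s ∈ S.rels) (ht : t ∈ S.rels) : (S.cprod s t).Nonempty := by
  obtain ⟨⟨x, z⟩, hxz⟩ := nonempty_of_mem_rels hpos hs
  obtain ⟨y, hzy⟩ := exists_mem_right hpos ht z
  exact ⟨_, relOf_mem_cprod hs ht ⟨z, hxz, hzy⟩⟩

section Thin

variable (ht : t ∈ S.rels) (ht1 : S.val t = 1)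
include ht ht1

/-- For `(x, y) ∈ s ○ t` with `r = r(x, y)`: `r ⊆ s ○ t` and `s ⊆ r ○ t*`, so
`s ○ t ⊆ r ○ t* ○ t = r`. -/
lemma comp_mem_rels_of_val_eq_one (hs : s ∈ S.rels) : s ○ t ∈ S.rels := by
  obtain ⟨⟨x, z⟩, hxz⟩ := nonempty_of_mem_rels hpos hs
  obtain ⟨y, hzy⟩ := exists_mem_right hpos ht z
  set r := S.relOf (x, y)
  have hr : r ∈ S.rels := relOf_mem_rels _
  have hrst : r ⊆ s ○ t := subset_comp_of_mem_comp hs ht hr (mem_relOf _) ⟨z, hxz, hzy⟩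
  have hsrt : s ⊆ r ○ schemeTransp t :=
    subset_comp_of_mem_comp hr (S.transpose_mem t ht) hs hxz ⟨y, mem_relOf _, hzy⟩
  have hstr : s ○ t ⊆ r := by
    calc s ○ t ⊆ r ○ schemeTransp t ○ t := SetRel.comp_subset_comp_left hsrt
      _ = r := by rw [SetRel.comp_assoc, transp_comp_self_of_val_eq_one hpos ht ht1,
        schemeDiag_eq_id, SetRel.comp_id]
  exact (hrst.antisymm hstr) ▸ hr

lemma comp_mem_rels_of_val_left_eq_one (hs : s ∈ S.rels) : t ○ s ∈ S.rels := by
  rw [← transp_mem_rels_iff, schemeTransp_eq_inv, SetRel.inv_comp, ← schemeTransp_eq_inv,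
    ← schemeTransp_eq_inv]
  exact comp_mem_rels_of_val_eq_one hpos (S.transpose_mem t ht) ((val_transp ht).trans ht1)
    (S.transpose_mem s hs)

lemma cprod_transp_self_of_val_eq_one : S.cprod (schemeTransp t) t = {schemeDiag X} := by
  have h := transp_comp_self_of_val_eq_one hpos ht ht1
  rw [cprod_eq_singleton_comp hpos (S.transpose_mem t ht) ht (h ▸ S.diag_mem), h]

end Thin

end NonemptyRels

structure IsSymmClosedSubset (S : AssocScheme X) (U : Set (Set (X × X))) : Prop where
  subset_rels : U ⊆ S.rels
  diag_mem : schemeDiag X ∈ U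
  transp_mem : ∀ u ∈ U, schemeTransp u ∈ U
  cprod_subset : ∀ u ∈ U, ∀ v ∈ U, S.cprod u v ⊆ U

def blockSetoid (hU : S.IsSymmClosedSubset U) : Setoid X where
  r x y := S.relOf (x, y) ∈ U
  iseqv :=
    { refl := fun x => by
        rw [relOf_eq S.diag_mem (show (x, x) ∈ schemeDiag X from rfl)]
        exact hU.diag_mem
      symm := fun h => by
        rw [relOf_swap]
        exact hU.transp_mem _ h
      trans := fun h₁ h₂ => hU.cprod_subset _ h₁ _ h₂ <|
        relOf_mem_cprod (hU.subset_rels h₁) (hU.subset_rels h₂) ⟨_, mem_relOf _, mem_relOf _⟩ }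

lemma nOrd_mono {V : Set (Set (X × X))} (h : U ⊆ V) : S.nOrd U ≤ S.nOrd V := by
  classical
  rw [nOrd, nOrd, finsum_mem_eq_toFinset_sum, finsum_mem_eq_toFinset_sum]
  exact Finset.sum_le_sum_of_subset (Set.toFinset_subset_toFinset.mpr h)

lemma nOrd_eq_ncard (h : ∀ u ∈ U, S.val u = 1) : S.nOrd U = U.ncard :=
  (finsum_mem_congr rfl h).trans finsum_one

lemma nOrd_eq_card_of_thinGroupIso {G : Type*} [AddGroup G] (h : S.ThinGroupIso U G) :
    S.nOrd U = Nat.card G := by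
  obtain ⟨hU1, f, hbij, -⟩ := h
  rw [nOrd_eq_ncard hU1, ← Nat.card_coe_set_eq, Nat.card_congr (hbij.equiv f), Nat.card_univ]

lemma card_setOf_relOf_mem (hU : U ⊆ S.rels) (x : X) :
    Nat.card {y | S.relOf (x, y) ∈ U} = S.nOrd U := by
  classical
  have hfin := Set.toFinite U
  have hmaps : ∀ y ∈ {y | S.relOf (x, y) ∈ U}.toFinset, S.relOf (x, y) ∈ hfin.toFinset := by
    simp
  rw [nOrd, finsum_mem_eq_finite_toFinset_sum _ hfin, Nat.card_eq_fintype_card,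
    ← Set.toFinset_card, Finset.card_eq_sum_card_fiberwise hmaps]
  refine Finset.sum_congr rfl fun u hu => ?_
  have huU := (Set.Finite.mem_toFinset hfin).mp hu
  rw [val_eq_card (hU huU) x, Nat.card_eq_fintype_card, ← Set.toFinset_card]
  congr 1
  ext y
  simp only [Finset.mem_filter, Set.mem_toFinset, Set.mem_ofPred_eq, relOf_eq_iff (hU huU)]
  exact ⟨And.right, fun h => ⟨relOf_eq (hU huU) h ▸ huU, h⟩⟩

lemma card_eq_card_quotient_mul_nOrd (hU : S.IsSymmClosedSubset U) :
    Fintype.card X = Nat.card (Quotient (S.blockSetoid hU)) * S.nOrd U := by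
  rw [← Nat.card_eq_fintype_card]
  exact Setoid.card_eq_card_quotient_mul _ (card_setOf_relOf_mem hU.subset_rels)

lemma mem_of_nOrd_eq_card [Nonempty X] (hpos : ∀ s ∈ S.rels, 0 < S.val s)
    (hU : S.IsSymmClosedSubset U) (hUX : S.nOrd U = Fintype.card X) (hs : s ∈ S.rels) :
    s ∈ U := by
  have h := card_eq_card_quotient_mul_nOrd hU
  rw [hUX] at h
  have : Subsingleton (Quotient (S.blockSetoid hU)) :=
    (Nat.card_eq_one_iff_unique.mp (Nat.eq_of_mul_eq_mul_right Fintype.card_pos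
      (h.symm.trans (one_mul _).symm))).1
  obtain ⟨⟨x, y⟩, hxy⟩ := nonempty_of_mem_rels hpos hs
  have hxy' : S.relOf (x, y) ∈ U :=
    Quotient.exact (s := S.blockSetoid hU) (Subsingleton.elim ⟦x⟧ ⟦y⟧)
  exact relOf_eq hs hxy ▸ hxy'

lemma thinResidue_subset_of (hU : S.IsClosedSubset U)
    (h : ∀ s ∈ S.rels, S.cprod (schemeTransp s) s ⊆ U) : S.thinResidue ⊆ U :=
  fun _ ht => Set.mem_sInter.mp ht U ⟨hU, h⟩

lemma thinResidue_subset_rels : S.thinResidue ⊆ S.rels :=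
  thinResidue_subset_of ⟨⟨_, S.diag_mem⟩, subset_rfl, fun _ _ _ _ _ hr => hr.1⟩
    fun _ _ _ hr => hr.1

lemma cprod_transp_self_subset_thinResidue (hs : s ∈ S.rels) :
    S.cprod (schemeTransp s) s ⊆ S.thinResidue :=
  fun _ hr => Set.mem_sInter.mpr fun _ hU => hU.2 s hs hr

lemma cprod_subset_thinResidue (ht : t ∈ S.thinResidue) (hu : u ∈ S.thinResidue) :
    S.cprod t u ⊆ S.thinResidue :=
  fun _ hr => Set.mem_sInter.mpr fun V hV =>
    hV.1.2.2 t (Set.mem_sInter.mp ht V hV) u (Set.mem_sInter.mp hu V hV) hr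

lemma diag_mem_thinResidue [Nonempty X] : schemeDiag X ∈ S.thinResidue := by
  obtain ⟨x⟩ := ‹Nonempty X›
  have hxx : (x, x) ∈ schemeDiag X := rfl
  have h := relOf_mem_cprod (S.transpose_mem _ S.diag_mem) S.diag_mem ⟨x, hxx, hxx⟩
  rw [relOf_eq S.diag_mem hxx] at h
  exact cprod_transp_self_subset_thinResidue S.diag_mem h

section ThinResidue

variable [Nonempty X] (hpos : ∀ s ∈ S.rels, 0 < S.val s)
  (hT1 : ∀ t ∈ S.thinResidue, S.val t = 1)
include hpos hT1

lemma comp_mem_thinResidue (ht : t ∈ S.thinResidue) (hu : u ∈ S.thinResidue) :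
    t ○ u ∈ S.thinResidue := by
  have htu := comp_mem_rels_of_val_eq_one hpos (thinResidue_subset_rels hu) (hT1 u hu)
    (thinResidue_subset_rels ht)
  refine cprod_subset_thinResidue ht hu ?_
  rw [cprod_eq_singleton_comp hpos (thinResidue_subset_rels ht) (thinResidue_subset_rels hu) htu]
  rfl

/-- `t ○ ·` is injective on the finite set `O^θ(S)`, hence surjective, and its preimage of the
diagonal is `t*`. -/
lemma transp_mem_thinResidue (ht : t ∈ S.thinResidue) : schemeTransp t ∈ S.thinResidue := by
  have htr := thinResidue_subset_rels ht
  have hcancel (u : Set (X × X)) : schemeTransp t ○ (t ○ u) = u := by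
    rw [← SetRel.comp_assoc, transp_comp_self_of_val_eq_one hpos htr (hT1 t ht),
      schemeDiag_eq_id, SetRel.id_comp]
  have hmaps : Set.MapsTo (t ○ ·) S.thinResidue S.thinResidue :=
    fun u hu => comp_mem_thinResidue hpos hT1 ht hu
  have hbij : Set.BijOn (t ○ ·) S.thinResidue S.thinResidue :=
    ((Set.toFinite _).injOn_iff_bijOn_of_mapsTo hmaps).mp
      fun u _ v _ huv => (hcancel u).symm.trans ((congrArg _ huv).trans (hcancel v))
  obtain ⟨u, hu, htu⟩ := hbij.surjOn diag_mem_thinResidue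
  have : u = schemeTransp t := by
    rw [← hcancel u, show t ○ u = schemeDiag X from htu, schemeDiag_eq_id, SetRel.comp_id]
  exact this ▸ hu

lemma isSymmClosedSubset_thinResidue : S.IsSymmClosedSubset S.thinResidue :=
  ⟨thinResidue_subset_rels, diag_mem_thinResidue, fun _ => transp_mem_thinResidue hpos hT1,
    fun _ ht _ hu => cprod_subset_thinResidue ht hu⟩

end ThinResidue

lemma comp_comm_of_thinGroupIso [Nonempty X] (hpos : ∀ s ∈ S.rels, 0 < S.val s)
    {G : Type*} [AddCommGroup G] (hres : S.ThinGroupIso S.thinResidue G)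
    (ht : t ∈ S.thinResidue) (hu : u ∈ S.thinResidue) : t ○ u = u ○ t := by
  obtain ⟨hT1, f, hbij, hadd⟩ := hres
  have hf {t u : Set (X × X)} (ht : t ∈ S.thinResidue) (hu : u ∈ S.thinResidue) :
      t ○ u ∈ S.thinResidue ∧ f (t ○ u) = f t + f u :=
    ⟨comp_mem_thinResidue hpos hT1 ht hu, hadd t ht u hu _ <|
      cprod_eq_singleton_comp hpos (thinResidue_subset_rels ht) (thinResidue_subset_rels hu)
        (comp_mem_rels_of_val_eq_one hpos (thinResidue_subset_rels hu) (hT1 u hu)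
          (thinResidue_subset_rels ht))⟩
  exact hbij.injOn (hf ht hu).1 (hf hu ht).1 (by rw [(hf ht hu).2, (hf hu ht).2, add_comm])

lemma nOrd_eq_card_of_thinResidue_ssubset {p : ℕ} (hp : p.Prime)
    (hcard : Fintype.card X = p ^ 3) (hT : S.nOrd S.thinResidue = p ^ 2)
    (hpos : ∀ s ∈ S.rels, 0 < S.val s) (hU : S.IsSymmClosedSubset U)
    (hTU : S.thinResidue ⊆ U) (hs : s ∈ U) (hsT : s ∉ S.thinResidue) :
    S.nOrd U = Fintype.card X := by
  have hdvd : S.nOrd U ∣ p ^ 3 :=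
    ⟨_, by rw [← hcard, card_eq_card_quotient_mul_nOrd hU, mul_comm]⟩
  obtain ⟨i, hi, hUi⟩ := (Nat.dvd_prime_pow hp).mp hdvd
  have hlt : p ^ 2 < S.nOrd U := by
    calc p ^ 2 < S.nOrd S.thinResidue + S.val s :=
          hT ▸ Nat.lt_add_of_pos_right (hpos s (hU.subset_rels hs))
      _ = S.nOrd (insert s S.thinResidue) := by
        rw [nOrd, nOrd, finsum_mem_insert _ hsT (Set.toFinite _), add_comm]
      _ ≤ S.nOrd U := nOrd_mono (Set.insert_subset hs hTU)
  have : 2 < i := by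
    by_contra! h
    exact (hUi ▸ hlt).not_ge (Nat.pow_le_pow_right hp.pos h)
  rw [hcard, hUi, show i = 3 by omega]

/-- The thin part of the right stabilizer `R(s)`. -/
def thinStab (S : AssocScheme X) (s : Set (X × X)) : Set (Set (X × X)) :=
  {t ∈ S.thinResidue | s ○ t = s}

section ThinStab

variable [Nonempty X] (hpos : ∀ s ∈ S.rels, 0 < S.val s)
  (hT1 : ∀ t ∈ S.thinResidue, S.val t = 1)
include hpos hT1

lemma isClosedSubset_thinStab (s : Set (X × X)) : S.IsClosedSubset (S.thinStab s) := by
  refine ⟨⟨_, diag_mem_thinResidue, SetRel.comp_id s⟩, fun t ht => thinResidue_subset_rels ht.1,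
    ?_⟩
  rintro t ⟨htT, hst⟩ u ⟨huT, hsu⟩ r hr
  have htr := thinResidue_subset_rels htT
  have hur := thinResidue_subset_rels huT
  rw [cprod_eq_singleton_comp hpos htr hur
    (comp_mem_rels_of_val_eq_one hpos hur (hT1 u huT) htr)] at hr
  rw [hr]
  exact ⟨comp_mem_thinResidue hpos hT1 htT huT, by rw [← SetRel.comp_assoc, hst, hsu]⟩

lemma comp_eq_self_of_mem_cprod_transp_self (hs : s ∈ S.rels)
    (ht : t ∈ S.cprod (schemeTransp s) s) : s ○ t = s := by
  have htT := cprod_transp_self_subset_thinResidue hs ht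
  obtain ⟨⟨x, y⟩, hxy⟩ := nonempty_of_mem_rels hpos ht.1
  obtain ⟨z, hzx, hzy⟩ := subset_comp_of_mem_cprod (S.transpose_mem s hs) hs ht hxy
  exact eq_of_mem_of_mem (q := (z, y)) (comp_mem_rels_of_val_eq_one hpos ht.1 (hT1 t htT) hs)
    hs ⟨x, hzx, hxy⟩ hzy

lemma cprod_transp_self_subset_thinStab (ht : t ∈ S.thinResidue) :
    S.cprod (schemeTransp t) t ⊆ S.thinStab s := by
  rw [cprod_transp_self_of_val_eq_one hpos (thinResidue_subset_rels ht) (hT1 t ht),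
    Set.singleton_subset_iff]
  exact ⟨diag_mem_thinResidue, SetRel.comp_id s⟩

end ThinStab

section Commutative

variable (hcomm : S.IsCommutative)
include hcomm

lemma cprod_comm (hs : s ∈ S.rels) (ht : t ∈ S.rels) : S.cprod s t = S.cprod t s := by
  ext r
  exact and_congr_right fun hr => by rw [hcomm s hs t ht r hr]

variable [Nonempty X] (hpos : ∀ s ∈ S.rels, 0 < S.val s)
include hpos

lemma comp_comm_of_val_eq_one (hs : s ∈ S.rels) (ht : t ∈ S.rels) (ht1 : S.val t = 1) :
    s ○ t = t ○ s := by
  have h := cprod_comm hcomm hs ht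
  rwa [cprod_eq_singleton_comp hpos hs ht (comp_mem_rels_of_val_eq_one hpos ht ht1 hs),
    cprod_eq_singleton_comp hpos ht hs (comp_mem_rels_of_val_left_eq_one hpos ht ht1 hs),
    Set.singleton_eq_singleton_iff] at h

/-- `w* w ⊆ v* u* u v = (u* u)(v* v)`, where moving `u* u` past `v` uses commutativity. -/
lemma exists_eq_comp_of_mem_cprod_transp_self (hT1 : ∀ t ∈ S.thinResidue, S.val t = 1)
    {w : Set (X × X)} (hu : u ∈ S.rels) (hv : v ∈ S.rels) (hw : w ∈ S.cprod u v)
    (ht : t ∈ S.cprod (schemeTransp w) w) :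
    ∃ t₁ ∈ S.cprod (schemeTransp u) u, ∃ t₂ ∈ S.cprod (schemeTransp v) v, t = t₁ ○ t₂ := by
  obtain ⟨⟨x, y⟩, hxy⟩ := nonempty_of_mem_rels hpos ht.1
  obtain ⟨z, hzx, hzy⟩ := subset_comp_of_mem_cprod (S.transpose_mem w hw.1) hw.1 ht hxy
  obtain ⟨m, hzm, hmx⟩ := subset_comp_of_mem_cprod hu hv hw (show (z, x) ∈ w from hzx)
  obtain ⟨n, hzn, hny⟩ := subset_comp_of_mem_cprod hu hv hw hzy
  have ht₁ := relOf_mem_cprod (S.transpose_mem u hu) hu ⟨z, hzm, hzn⟩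
  have ht₁r := relOf_mem_rels (S := S) (m, n)
  have ht₁1 := hT1 _ (cprod_transp_self_subset_thinResidue hu ht₁)
  obtain ⟨x', hxx'⟩ := exists_mem_right hpos ht₁r x
  have hnx' : (n, x') ∈ v := by
    obtain ⟨n', hmn', hn'x'⟩ : (m, x') ∈ S.relOf (m, n) ○ v :=
      comp_comm_of_val_eq_one hcomm hpos hv ht₁r ht₁1 ▸ ⟨x, hmx, hxx'⟩
    rwa [right_unique_of_val_eq_one ht₁r ht₁1 (mem_relOf (m, n)) hmn']
  refine ⟨_, ht₁, _, relOf_mem_cprod (S.transpose_mem v hv) hv ⟨n, hnx', hny⟩, ?_⟩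
  exact eq_of_mem_of_mem ht.1
    (comp_mem_rels_of_val_left_eq_one hpos ht₁r ht₁1 (relOf_mem_rels _)) hxy
    ⟨x', hxx', mem_relOf _⟩

lemma isSymmClosedSubset_setOf_cprod_subset_thinStab
    (hT1 : ∀ t ∈ S.thinResidue, S.val t = 1) :
    S.IsSymmClosedSubset {w ∈ S.rels | S.cprod (schemeTransp w) w ⊆ S.thinStab s} where
  subset_rels _ hw := hw.1
  diag_mem := ⟨S.diag_mem, cprod_transp_self_subset_thinStab hpos hT1 diag_mem_thinResidue⟩
  transp_mem w hw :=
    ⟨S.transpose_mem w hw.1, cprod_comm hcomm hw.1 (S.transpose_mem w hw.1) ▸ hw.2⟩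
  cprod_subset u hu v hv w hw := by
    refine ⟨hw.1, fun t ht => ?_⟩
    obtain ⟨t₁, ht₁, t₂, ht₂, rfl⟩ :=
      exists_eq_comp_of_mem_cprod_transp_self hcomm hpos hT1 hu.1 hv.1 hw ht
    exact ⟨cprod_transp_self_subset_thinResidue hw.1 ht,
      by rw [← SetRel.comp_assoc, (hu.2 ht₁).2, (hv.2 ht₂).2]⟩

theorem sprod_thinResidue_singleton_of_isCommutative {p : ℕ} (hp : p.Prime)
    (hcard : Fintype.card X = p ^ 3) (hT : S.nOrd S.thinResidue = p ^ 2)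
    (hT1 : ∀ t ∈ S.thinResidue, S.val t = 1) (hs : s ∈ S.rels) (hsT : s ∉ S.thinResidue) :
    S.sprod S.thinResidue {s} = {s} := by
  have hR := isSymmClosedSubset_setOf_cprod_subset_thinStab hcomm hpos (s := s) hT1
  have hTR : S.thinResidue ⊆ {w ∈ S.rels | S.cprod (schemeTransp w) w ⊆ S.thinStab s} :=
    fun t ht => ⟨thinResidue_subset_rels ht, cprod_transp_self_subset_thinStab hpos hT1 ht⟩
  have hsR : s ∈ {w ∈ S.rels | S.cprod (schemeTransp w) w ⊆ S.thinStab s} :=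
    ⟨hs, fun t ht => ⟨cprod_transp_self_subset_thinResidue hs ht,
      comp_eq_self_of_mem_cprod_transp_self hpos hT1 hs ht⟩⟩
  have hRX := nOrd_eq_card_of_thinResidue_ssubset hp hcard hT hpos hR hTR hsR hsT
  have hTs : S.thinResidue ⊆ S.thinStab s :=
    thinResidue_subset_of (isClosedSubset_thinStab hpos hT1 s)
      fun w hw => (mem_of_nOrd_eq_card hpos hR hRX hw).2
  refine Set.eq_singleton_iff_unique_mem.mpr ⟨?_, ?_⟩
  · obtain ⟨⟨x, y⟩, hxy⟩ := nonempty_of_mem_rels hpos hs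
    exact ⟨hs, _, diag_mem_thinResidue, s, rfl,
      (a_ne_zero_iff S.diag_mem hs hs hxy).mpr ⟨x, rfl, hxy⟩⟩
  · rintro r ⟨hr, t, htT, q, hq, ha⟩
    have htr := thinResidue_subset_rels htT
    have hrts : r ∈ S.cprod t s := ⟨hr, Set.mem_singleton_iff.mp hq ▸ ha⟩
    rwa [cprod_eq_singleton_comp hpos htr hs
      (comp_mem_rels_of_val_left_eq_one hpos htr (hT1 t htT) hs),
      ← comp_comm_of_val_eq_one hcomm hpos hs htr (hT1 t htT), (hTs htT).2] at hrts

end Commutative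

noncomputable def toBlock (hU : S.IsSymmClosedSubset U) (x : X) : Quotient (S.blockSetoid hU) :=
  Quotient.mk _ x

lemma toBlock_eq_toBlock_iff (hU : S.IsSymmClosedSubset U) :
    toBlock hU x = toBlock hU y ↔ S.relOf (x, y) ∈ U :=
  Quotient.eq

lemma toBlock_surjective (hU : S.IsSymmClosedSubset U) : Function.Surjective (toBlock hU) :=
  Quotient.mk_surjective

/-- `Classical.epsilon` gives a junk point when `a.out` has no `s`-successor; for relations of `S`
the choices do not matter by `blockMap_toBlock`. -/
noncomputable def blockMap [Nonempty X] (hU : S.IsSymmClosedSubset U) (s : Set (X × X))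
    (a : Quotient (S.blockSetoid hU)) : Quotient (S.blockSetoid hU) :=
  toBlock hU (Classical.epsilon fun y => (a.out, y) ∈ s)

lemma comp_eq_self_of_mem_thinResidue_left [Nonempty X] (hpos : ∀ s ∈ S.rels, 0 < S.val s)
    (hT1 : ∀ t ∈ S.thinResidue, S.val t = 1)
    (hR : ∀ s ∈ S.rels, s ∉ S.thinResidue → S.sprod S.thinResidue {s} = {s})
    (hs : s ∈ S.rels) (hsT : s ∉ S.thinResidue) (ht : t ∈ S.thinResidue) : t ○ s = s := by
  have htr := thinResidue_subset_rels ht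
  have hts := comp_mem_rels_of_val_left_eq_one hpos htr (hT1 t ht) hs
  have : t ○ s ∈ S.cprod t s := by
    rw [cprod_eq_singleton_comp hpos htr hs hts]
    rfl
  have : t ○ s ∈ S.sprod S.thinResidue {s} := ⟨hts, t, ht, s, rfl, this.2⟩
  rwa [hR s hs hsT] at this

section Blocks

variable (hT : S.IsSymmClosedSubset S.thinResidue)
include hT

lemma toBlock_eq_of_mem_thinResidue (hsT : s ∈ S.thinResidue) (hxy : (x, y) ∈ s) :
    toBlock hT x = toBlock hT y :=
  (toBlock_eq_toBlock_iff hT).mpr (relOf_eq (hT.subset_rels hsT) hxy ▸ hsT)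

lemma toBlock_eq_of_mem_of_mem {y' : X} (hs : s ∈ S.rels) (hxy : (x, y) ∈ s)
    (hxy' : (x, y') ∈ s) : toBlock hT y = toBlock hT y' :=
  (toBlock_eq_toBlock_iff hT).mpr <| cprod_transp_self_subset_thinResidue hs <|
    relOf_mem_cprod (S.transpose_mem s hs) hs ⟨x, hxy, hxy'⟩

variable [Nonempty X] (hpos : ∀ s ∈ S.rels, 0 < S.val s)
  (hT1 : ∀ t ∈ S.thinResidue, S.val t = 1)
  (hR : ∀ s ∈ S.rels, s ∉ S.thinResidue → S.sprod S.thinResidue {s} = {s})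
include hpos hT1 hR

lemma comp_eq_self_of_mem_thinResidue_right (hs : s ∈ S.rels) (hsT : s ∉ S.thinResidue)
    (ht : t ∈ S.thinResidue) : s ○ t = s := by
  have h := comp_eq_self_of_mem_thinResidue_left hpos hT1 hR (S.transpose_mem s hs)
    (fun h => hsT (hT.transp_mem _ h)) (hT.transp_mem t ht)
  calc s ○ t = SetRel.inv (schemeTransp t ○ schemeTransp s) :=
        (SetRel.inv_comp (schemeTransp t) (schemeTransp s)).symm
    _ = s := by rw [h]; rfl

lemma mem_of_toBlock_eq_left {x' : X} (hs : s ∈ S.rels) (hsT : s ∉ S.thinResidue)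
    (hxy : (x, y) ∈ s) (h : toBlock hT x' = toBlock hT x) : (x', y) ∈ s := by
  rw [← comp_eq_self_of_mem_thinResidue_left hpos hT1 hR hs hsT
    ((toBlock_eq_toBlock_iff hT).mp h)]
  exact ⟨x, mem_relOf _, hxy⟩

lemma mem_of_toBlock_eq_right {y' : X} (hs : s ∈ S.rels) (hsT : s ∉ S.thinResidue)
    (hxy : (x, y) ∈ s) (h : toBlock hT y = toBlock hT y') : (x, y') ∈ s := by
  rw [← comp_eq_self_of_mem_thinResidue_right hT hpos hT1 hR hs hsT
    ((toBlock_eq_toBlock_iff hT).mp h)]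
  exact ⟨y, hxy, mem_relOf _⟩

lemma blockMap_toBlock (hs : s ∈ S.rels) (hxy : (x, y) ∈ s) :
    blockMap hT s (toBlock hT x) = toBlock hT y := by
  set x' := (toBlock hT x).out
  have hx' : toBlock hT x' = toBlock hT x := Quotient.out_eq _
  have hy' : (x', Classical.epsilon fun y => (x', y) ∈ s) ∈ s :=
    Classical.epsilon_spec (exists_mem_right hpos hs x')
  change toBlock hT (Classical.epsilon _) = _
  by_cases hsT : s ∈ S.thinResidue
  · rw [← toBlock_eq_of_mem_thinResidue hT hsT hy', hx',
      toBlock_eq_of_mem_thinResidue hT hsT hxy]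
  · exact toBlock_eq_of_mem_of_mem hT hs hy'
      (mem_of_toBlock_eq_left hT hpos hT1 hR hs hsT hxy hx')

lemma mem_of_blockMap_toBlock (hs : s ∈ S.rels) (hsT : s ∉ S.thinResidue)
    (h : blockMap hT s (toBlock hT x) = toBlock hT y) : (x, y) ∈ s := by
  obtain ⟨y', hy'⟩ := exists_mem_right hpos hs x
  rw [blockMap_toBlock hT hpos hT1 hR hs hy'] at h
  exact mem_of_toBlock_eq_right hT hpos hT1 hR hs hsT hy' h

lemma blockMap_of_mem_thinResidue (ht : t ∈ S.thinResidue) : blockMap hT t = id := by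
  funext a
  obtain ⟨x, rfl⟩ := toBlock_surjective hT a
  obtain ⟨y, hxy⟩ := exists_mem_right hpos (hT.subset_rels ht) x
  rw [blockMap_toBlock hT hpos hT1 hR (hT.subset_rels ht) hxy,
    toBlock_eq_of_mem_thinResidue hT ht hxy, id]

lemma blockMap_eq_comp_of_mem_cprod {w : Set (X × X)} (hu : u ∈ S.rels) (hv : v ∈ S.rels)
    (hw : w ∈ S.cprod u v) : blockMap hT w = blockMap hT v ∘ blockMap hT u := by
  funext a
  obtain ⟨x, rfl⟩ := toBlock_surjective hT a
  obtain ⟨y, hxy⟩ := exists_mem_right hpos hw.1 x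
  obtain ⟨z, hxz, hzy⟩ := subset_comp_of_mem_cprod hu hv hw hxy
  rw [Function.comp_apply, blockMap_toBlock hT hpos hT1 hR hw.1 hxy,
    blockMap_toBlock hT hpos hT1 hR hu hxz, blockMap_toBlock hT hpos hT1 hR hv hzy]

lemma blockMap_eq_blockMap_relOf (hs : s ∈ S.rels)
    (h : blockMap hT s (toBlock hT x) = toBlock hT y) :
    blockMap hT s = blockMap hT (S.relOf (x, y)) := by
  by_cases hsT : s ∈ S.thinResidue
  · rw [blockMap_of_mem_thinResidue hT hpos hT1 hR hsT] at h ⊢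
    rw [blockMap_of_mem_thinResidue hT hpos hT1 hR ((toBlock_eq_toBlock_iff hT).mp h)]
  · rw [relOf_eq hs (mem_of_blockMap_toBlock hT hpos hT1 hR hs hsT h)]

lemma blockMap_comm (hQ : (Nat.card (Quotient (S.blockSetoid hT))).Prime) (hu : u ∈ S.rels)
    (hv : v ∈ S.rels) : blockMap hT u ∘ blockMap hT v = blockMap hT v ∘ blockMap hT u := by
  refine comp_comm_of_regular_of_prime_card (G := blockMap hT '' S.rels) hQ
    ⟨_, S.diag_mem, blockMap_of_mem_thinResidue hT hpos hT1 hR diag_mem_thinResidue⟩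
    ?_ ?_ ⟨u, hu, rfl⟩ ⟨v, hv, rfl⟩
  · rintro _ ⟨u, hu, rfl⟩ _ ⟨v, hv, rfl⟩
    obtain ⟨w, hw⟩ := cprod_nonempty hpos hv hu
    exact ⟨w, hw.1, blockMap_eq_comp_of_mem_cprod hT hpos hT1 hR hv hu hw⟩
  · intro a b
    obtain ⟨x, rfl⟩ := toBlock_surjective hT a
    obtain ⟨y, rfl⟩ := toBlock_surjective hT b
    refine ⟨blockMap hT (S.relOf (x, y)), ⟨⟨_, relOf_mem_rels _, rfl⟩,
      blockMap_toBlock hT hpos hT1 hR (relOf_mem_rels _) (mem_relOf _)⟩, ?_⟩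
    rintro _ ⟨⟨s, hs, rfl⟩, h⟩
    exact blockMap_eq_blockMap_relOf hT hpos hT1 hR hs h

lemma mem_comp_iff_blockMap (hu : u ∈ S.rels) (hv : v ∈ S.rels) (hvT : v ∉ S.thinResidue) :
    (x, y) ∈ u ○ v ↔ blockMap hT v (blockMap hT u (toBlock hT x)) = toBlock hT y := by
  obtain ⟨z, hxz⟩ := exists_mem_right hpos hu x
  rw [blockMap_toBlock hT hpos hT1 hR hu hxz]
  refine ⟨fun ⟨z', hxz', hz'y⟩ => ?_,
    fun h => ⟨z, hxz, mem_of_blockMap_toBlock hT hpos hT1 hR hv hvT h⟩⟩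
  rw [toBlock_eq_of_mem_of_mem hT hu hxz hxz', blockMap_toBlock hT hpos hT1 hR hv hz'y]

lemma comp_comm_of_not_mem_thinResidue (hQ : (Nat.card (Quotient (S.blockSetoid hT))).Prime)
    (hu : u ∈ S.rels) (huT : u ∉ S.thinResidue) (hv : v ∈ S.rels) (hvT : v ∉ S.thinResidue) :
    u ○ v = v ○ u := by
  ext ⟨x, y⟩
  rw [mem_comp_iff_blockMap hT hpos hT1 hR hu hv hvT,
    mem_comp_iff_blockMap hT hpos hT1 hR hv hu huT, ← Function.comp_apply (f := blockMap hT v),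
    blockMap_comm hT hpos hT1 hR hQ hv hu, Function.comp_apply]

lemma comp_comm (hQ : (Nat.card (Quotient (S.blockSetoid hT))).Prime)
    (hTcomm : ∀ t ∈ S.thinResidue, ∀ t' ∈ S.thinResidue, t ○ t' = t' ○ t)
    (hu : u ∈ S.rels) (hv : v ∈ S.rels) : u ○ v = v ○ u := by
  by_cases huT : u ∈ S.thinResidue <;> by_cases hvT : v ∈ S.thinResidue
  · exact hTcomm u huT v hvT
  · rw [comp_eq_self_of_mem_thinResidue_left hpos hT1 hR hv hvT huT,
      comp_eq_self_of_mem_thinResidue_right hT hpos hT1 hR hv hvT huT]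
  · rw [comp_eq_self_of_mem_thinResidue_right hT hpos hT1 hR hu huT hvT,
      comp_eq_self_of_mem_thinResidue_left hpos hT1 hR hu huT hvT]
  · exact comp_comm_of_not_mem_thinResidue hT hpos hT1 hR hQ hu huT hv hvT

lemma val_eq_nOrd_of_not_mem_thinResidue (hs : s ∈ S.rels) (hsT : s ∉ S.thinResidue) :
    S.val s = S.nOrd S.thinResidue := by
  obtain ⟨⟨x, y⟩, hxy⟩ := nonempty_of_mem_rels hpos hs
  rw [val_eq_card hs x, ← card_setOf_relOf_mem hT.subset_rels y]
  congr 2 with z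
  rw [Set.mem_ofPred_eq, Set.mem_ofPred_eq, ← toBlock_eq_toBlock_iff hT]
  exact ⟨toBlock_eq_of_mem_of_mem hT hs hxy, mem_of_toBlock_eq_right hT hpos hT1 hR hs hsT hxy⟩

lemma a_eq_val_of_mem_comp {w : Set (X × X)} (hu : u ∈ S.rels) (hv : v ∈ S.rels)
    (hvT : v ∉ S.thinResidue) (hw : w ∈ S.rels) (hxy : (x, y) ∈ w) (h : (x, y) ∈ u ○ v) :
    S.a u v w = S.val u := by
  obtain ⟨z₀, hxz₀, hz₀y⟩ := h
  rw [a_eq_card hu hv hw hxy, val_eq_card hu x]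
  congr 2 with z
  exact and_iff_left_of_imp fun hxz =>
    mem_of_toBlock_eq_left hT hpos hT1 hR hv hvT hz₀y (toBlock_eq_of_mem_of_mem hT hu hxz hxz₀)

open scoped Classical in
lemma a_eq_ite {w : Set (X × X)} (hu : u ∈ S.rels) (hv : v ∈ S.rels) (hw : w ∈ S.rels)
    (hxy : (x, y) ∈ w) :
    S.a u v w = if (x, y) ∈ u ○ v then min (S.val u) (S.val v) else 0 := by
  have hne := a_ne_zero_iff hu hv hw hxy
  split_ifs with h
  swap
  · exact not_not.mp (mt hne.mp h)
  have ha := hne.mpr h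
  by_cases huT : u ∈ S.thinResidue
  · have := a_le_val_left hu hv hw hxy
    rw [hT1 u huT, min_eq_left (hpos v hv)] at *
    omega
  by_cases hvT : v ∈ S.thinResidue
  · have := a_le_val_right hu hv hw hxy
    rw [hT1 v hvT, min_eq_right (hpos u hu)] at *
    omega
  rw [a_eq_val_of_mem_comp hT hpos hT1 hR hu hv hvT hw hxy h,
    val_eq_nOrd_of_not_mem_thinResidue hT hpos hT1 hR hu huT,
    val_eq_nOrd_of_not_mem_thinResidue hT hpos hT1 hR hv hvT, min_self]

end Blocks

theorem isCommutative_of_sprod_thinResidue_singleton [Nonempty X]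
    (hpos : ∀ s ∈ S.rels, 0 < S.val s) {p : ℕ} (hp : p.Prime) (hcard : Fintype.card X = p ^ 3)
    (hTn : S.nOrd S.thinResidue = p ^ 2) {G : Type*} [AddCommGroup G]
    (hres : S.ThinGroupIso S.thinResidue G)
    (hR : ∀ s ∈ S.rels, s ∉ S.thinResidue → S.sprod S.thinResidue {s} = {s}) :
    S.IsCommutative := by
  have hT := isSymmClosedSubset_thinResidue hpos hres.1
  have hQ : Nat.card (Quotient (S.blockSetoid hT)) = p := by
    have h := card_eq_card_quotient_mul_nOrd hT
    rw [hcard, hTn, pow_succ, mul_comm] at h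
    exact Nat.eq_of_mul_eq_mul_right (pow_pos hp.pos 2) h.symm
  intro u hu v hv w hw
  obtain ⟨⟨x, y⟩, hxy⟩ := nonempty_of_mem_rels hpos hw
  rw [a_eq_ite hT hpos hres.1 hR hu hv hw hxy, a_eq_ite hT hpos hres.1 hR hv hu hw hxy, min_comm,
    comp_comm hT hpos hres.1 hR (hQ ▸ hp)
      (fun _ ht _ ht' => comp_comm_of_thinGroupIso hpos hres ht ht') hu hv]

end AssocScheme

/-- a p-scheme of order `p^3` with thin residue isomorphic to
`C_p × C_p` is commutative iff `O^θ(S) s = {s}` for every `s ∈ S ∖ O^θ(S)`. -/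
theorem stmt14 {X : Type*} [Fintype X] (S : AssocScheme X) (p : ℕ)
    (hp : S.IsPScheme p) (hcard : Fintype.card X = p ^ 3)
    (hres : S.ThinGroupIso S.thinResidue (ZMod p × ZMod p)) :
    S.IsCommutative ↔
      ∀ s ∈ S.rels, s ∉ S.thinResidue → S.sprod S.thinResidue {s} = {s} := by
  open AssocScheme in
  have hpos : ∀ s ∈ S.rels, 0 < S.val s := fun s hs => val_pos_of_isPScheme hp hs
  have : Nonempty X := Fintype.card_pos_iff.mp (hcard ▸ pow_pos hp.1.pos 3)
  have hTn : S.nOrd S.thinResidue = p ^ 2 := by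
    rw [nOrd_eq_card_of_thinGroupIso hres, Nat.card_prod, Nat.card_zmod, sq]
  exact ⟨fun hcomm s hs hsT =>
      sprod_thinResidue_singleton_of_isCommutative hcomm hpos hp.1 hcard hTn hres.1 hs hsT,
    isCommutative_of_sprod_thinResidue_singleton hpos hp.1 hcard hTn hres⟩
end

section
/- Let S1 and S2 be association schemes. Then S1 and S2 are both schurian if and only if their wreath product S1 ≀ S2 is schurian. -/
open Set

/-!
The relations of a schurian scheme are exactly the orbitals of its full automorphism group, so
a scheme is schurian iff each of its relations is an orbital of `autGroup S.rels`.
Automorphisms `σ y` of `S1` (one for each fibre) and `τ` of `S2` assemble into the automorphism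
`(w, y) ↦ (σ y w, τ y)` of `S1 ≀ S2`, and these are transitive on every wreath relation.
Conversely, an automorphism of `S1 ≀ S2` permutes the fibres `W × {y}`; the induced permutation
of `Y`, and the restriction to a fibre that it fixes, are automorphisms of `S2` and of `S1`
that carry the transitivity down to the factors.
-/

open MulAction

section Automorphisms

variable {X : Type*}

-- The `↔` makes closure under inverses free, without a finiteness argument.
def autGroup (R : Set (Set (X × X))) : Subgroup (Equiv.Perm X) where
  carrier := {g | ∀ r ∈ R, ∀ p : X × X, g • p ∈ r ↔ p ∈ r}
  one_mem' := by simp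
  mul_mem' {g h} hg hh r hr p := by rw [mul_smul, hg r hr, hh r hr]
  inv_mem' {g} hg r hr p := by rw [← hg r hr, smul_inv_smul]

lemma mem_orbit_subgroup_iff {G : Subgroup (Equiv.Perm X)} {p q : X × X} :
    p ∈ orbit G q ↔ ∃ g ∈ G, g • q = p := by
  simp [mem_orbit_iff, Subgroup.smul_def]

lemma orbit_autGroup_subset {R : Set (Set (X × X))} {r : Set (X × X)} (hr : r ∈ R) {p : X × X}
    (hp : p ∈ r) : orbit (autGroup R) p ⊆ r := by
  rintro q hq
  obtain ⟨g, hg, rfl⟩ := mem_orbit_subgroup_iff.mp hq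
  exact (hg r hr p).mpr hp

def IsAutOrbitals (R : Set (Set (X × X))) : Prop :=
  ∀ r ∈ R, ∃ p, r = orbit (autGroup R) p

lemma IsAutOrbitals.exists_apply_eq {R : Set (Set (X × X))} (hR : IsAutOrbitals R)
    (hdiag : schemeDiag X ∈ R) (x y : X) : ∃ g ∈ autGroup R, g x = y := by
  obtain ⟨p, hp⟩ := hR _ hdiag
  have hx : (x, x) ∈ orbit (autGroup R) p := hp ▸ rfl
  have hy : (y, y) ∈ orbit (autGroup R) p := hp ▸ rfl
  rw [← orbit_eq_iff.mpr hx] at hy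
  obtain ⟨g, hg, hgxy⟩ := mem_orbit_subgroup_iff.mp hy
  exact ⟨g, hg, congrArg Prod.fst hgxy⟩

lemma orbital_eq_orbit (G : Subgroup (Equiv.Perm X)) (q : X × X) :
    {r : X × X | ∃ g ∈ G, (g q.1, g q.2) = r} = orbit G q := by
  ext r
  rw [mem_orbit_subgroup_iff]
  rfl

end Automorphisms

theorem AssocScheme.isSchurian_iff_isAutOrbitals {X : Type*} [Fintype X] (S : AssocScheme X) :
    S.IsSchurian ↔ IsAutOrbitals S.rels := by
  simp only [AssocScheme.IsSchurian, orbital_eq_orbit]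
  constructor
  · rintro ⟨G, -, hG⟩ s hs
    have hGaut : G ≤ autGroup S.rels := by
      intro g hg r hr p
      rw [hG] at hr
      obtain ⟨q, rfl⟩ := hr
      rw [← orbit_eq_iff, ← orbit_eq_iff, show g • p = (⟨g, hg⟩ : G) • p from rfl, orbit_smul]
    obtain ⟨q, rfl⟩ := hG ▸ hs
    refine ⟨q, subset_antisymm (fun p hp => ?_) (orbit_autGroup_subset hs (mem_orbit_self q))⟩
    obtain ⟨g, hg, rfl⟩ := mem_orbit_subgroup_iff.mp hp
    exact mem_orbit_subgroup_iff.mpr ⟨g, hGaut hg, rfl⟩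
  · intro hS
    refine ⟨autGroup S.rels, hS.exists_apply_eq S.diag_mem, Set.ext fun s => ⟨hS s, ?_⟩⟩
    rintro ⟨q, rfl⟩
    obtain ⟨s, ⟨hs, hqs⟩, -⟩ := S.partition q
    obtain ⟨p, rfl⟩ := hS s hs
    rwa [orbit_eq_iff.mpr hqs]

theorem AssocScheme.eq_schemeDiag_of_mem {X : Type*} [Fintype X] (S : AssocScheme X)
    {s : Set (X × X)} (hs : s ∈ S.rels) {x : X} (hx : (x, x) ∈ s) : s = schemeDiag X :=
  (S.partition (x, x)).unique ⟨hs, hx⟩ ⟨S.diag_mem, rfl⟩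

section Wreath

variable {W Y : Type*}

def wreathFiberRel (Y : Type*) (f : Set (W × W)) : Set ((W × Y) × (W × Y)) :=
  {p | p.1.2 = p.2.2 ∧ (p.1.1, p.2.1) ∈ f}

def wreathBaseRel (W : Type*) (h : Set (Y × Y)) : Set ((W × Y) × (W × Y)) :=
  {p | (p.1.2, p.2.2) ∈ h}

lemma wreathFiberRel_schemeDiag : wreathFiberRel Y (schemeDiag W) = schemeDiag (W × Y) := by
  ext ⟨⟨a, y⟩, ⟨b, z⟩⟩
  simp [wreathFiberRel, schemeDiag, and_comm]

def wreathPerm (σ : Y → Equiv.Perm W) (τ : Equiv.Perm Y) : Equiv.Perm (W × Y) where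
  toFun p := (σ p.2 p.1, τ p.2)
  invFun p := ((σ (τ.symm p.2)).symm p.1, τ.symm p.2)
  left_inv p := by simp
  right_inv p := by simp

@[simp] lemma wreathPerm_apply (σ : Y → Equiv.Perm W) (τ : Equiv.Perm Y) (p : W × Y) :
    wreathPerm σ τ p = (σ p.2 p.1, τ p.2) := rfl

variable [Fintype W] [Fintype Y] {S1 : AssocScheme W} {S2 : AssocScheme Y}

lemma fiber_mem_wreathRels {f : Set (W × W)} (hf : f ∈ S1.rels) :
    wreathFiberRel Y f ∈ wreathRels S1 S2 :=
  Or.inl ⟨f, hf, rfl⟩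

lemma base_mem_wreathRels {h : Set (Y × Y)} (hh : h ∈ S2.rels) (hd : h ≠ schemeDiag Y) :
    wreathBaseRel W h ∈ wreathRels S1 S2 :=
  Or.inr ⟨h, hh, hd, rfl⟩

lemma wreathPerm_mem_autGroup {σ : Y → Equiv.Perm W} {τ : Equiv.Perm Y}
    (hσ : ∀ y, σ y ∈ autGroup S1.rels) (hτ : τ ∈ autGroup S2.rels) :
    wreathPerm σ τ ∈ autGroup (wreathRels S1 S2) := by
  rintro r (⟨f, hf, rfl⟩ | ⟨h, hh, -, rfl⟩) ⟨⟨a, y⟩, ⟨b, z⟩⟩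
  · simp only [Prod.smul_mk, Equiv.Perm.smul_def, wreathPerm_apply, Set.mem_ofPred_eq,
      τ.injective.eq_iff, and_congr_right_iff]
    rintro rfl
    exact hσ y f hf (a, b)
  · exact hτ h hh (y, z)

theorem isAutOrbitals_wreathRels (h1 : IsAutOrbitals S1.rels) (h2 : IsAutOrbitals S2.rels) :
    IsAutOrbitals (wreathRels S1 S2) := by
  obtain ⟨⟨w0, -⟩, -⟩ := h1 _ S1.diag_mem
  obtain ⟨⟨y0, -⟩, -⟩ := h2 _ S2.diag_mem
  rintro r (⟨f, hf, rfl⟩ | ⟨h, hh, hd, rfl⟩)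
  · obtain ⟨⟨w1, w2⟩, rfl⟩ := h1 f hf
    refine ⟨((w1, y0), (w2, y0)), subset_antisymm ?_
      (orbit_autGroup_subset (fiber_mem_wreathRels hf) ⟨rfl, mem_orbit_self _⟩)⟩
    rintro ⟨⟨u1, z⟩, ⟨u2, z'⟩⟩ ⟨rfl : z = z', hu⟩
    obtain ⟨σ, hσ, hσw⟩ := mem_orbit_subgroup_iff.mp hu
    obtain ⟨τ, hτ, hτy⟩ := h2.exists_apply_eq S2.diag_mem y0 z
    refine mem_orbit_subgroup_iff.mpr
      ⟨wreathPerm (fun _ => σ) τ, wreathPerm_mem_autGroup (fun _ => hσ) hτ, ?_⟩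
    simp_all
  · obtain ⟨⟨z1, z2⟩, rfl⟩ := h2 h hh
    have hz : z1 ≠ z2 := by
      rintro rfl
      exact hd (S2.eq_schemeDiag_of_mem hh (mem_orbit_self _))
    refine ⟨((w0, z1), (w0, z2)), subset_antisymm ?_
      (orbit_autGroup_subset (base_mem_wreathRels hh hd) (mem_orbit_self _))⟩
    rintro ⟨⟨u1, t1⟩, ⟨u2, t2⟩⟩ ht
    obtain ⟨τ, hτ, hτz⟩ := mem_orbit_subgroup_iff.mp ht
    obtain ⟨σ1, hσ1, hσw1⟩ := h1.exists_apply_eq S1.diag_mem w0 u1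
    obtain ⟨σ2, hσ2, hσw2⟩ := h1.exists_apply_eq S1.diag_mem w0 u2
    classical
    refine mem_orbit_subgroup_iff.mpr ⟨wreathPerm (fun y => if y = z1 then σ1 else σ2) τ,
      wreathPerm_mem_autGroup (fun y => by split_ifs <;> assumption) hτ, ?_⟩
    simp_all [hz.symm]

end Wreath

section WreathBackward

variable {W Y : Type*} [Fintype W] [Fintype Y] {S1 : AssocScheme W} {S2 : AssocScheme Y}
  {g : Equiv.Perm (W × Y)}

lemma snd_apply_eq_of_mem_autGroup (hg : g ∈ autGroup (wreathRels S1 S2)) {a b : W × Y}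
    (hab : a.2 = b.2) : (g a).2 = (g b).2 := by
  obtain ⟨f, ⟨hf, hfab⟩, -⟩ := S1.partition (a.1, b.1)
  exact ((hg _ (fiber_mem_wreathRels hf) (a, b)).mpr ⟨hab, hfab⟩).1

lemma snd_apply_eq_iff_of_mem_autGroup (hg : g ∈ autGroup (wreathRels S1 S2)) {a b : W × Y} :
    (g a).2 = (g b).2 ↔ a.2 = b.2 :=
  ⟨fun h => by simpa using snd_apply_eq_of_mem_autGroup (inv_mem hg) h,
    snd_apply_eq_of_mem_autGroup hg⟩

lemma exists_snd_apply_eq_of_mem_autGroup (hg : g ∈ autGroup (wreathRels S1 S2)) (w0 : W) :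
    ∃ τ ∈ autGroup S2.rels, ∀ p : W × Y, (g p).2 = τ p.2 := by
  let τ := Equiv.ofBijective (fun y => (g (w0, y)).2) <| Finite.injective_iff_bijective.mp
    fun y z h => (snd_apply_eq_iff_of_mem_autGroup hg).mp h
  have hgτ (p : W × Y) : (g p).2 = τ p.2 := snd_apply_eq_of_mem_autGroup hg (b := (w0, p.2)) rfl
  refine ⟨τ, fun h hh ⟨y, z⟩ => ?_, hgτ⟩
  by_cases hd : h = schemeDiag Y
  · subst hd
    exact τ.injective.eq_iff
  · simpa [wreathBaseRel, hgτ] using hg _ (base_mem_wreathRels hh hd) ((w0, y), (w0, z))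

lemma exists_apply_eq_of_mem_autGroup (hg : g ∈ autGroup (wreathRels S1 S2)) {w0 : W} {y0 : Y}
    (hy0 : (g (w0, y0)).2 = y0) : ∃ σ ∈ autGroup S1.rels, ∀ w, g (w, y0) = (σ w, y0) := by
  have hfiber (w : W) : (g (w, y0)).2 = y0 :=
    (snd_apply_eq_of_mem_autGroup hg (a := (w, y0)) (b := (w0, y0)) rfl).trans hy0
  let σ := Equiv.ofBijective (fun w => (g (w, y0)).1) <| Finite.injective_iff_bijective.mp
    fun w w' h => congrArg Prod.fst (g.injective (Prod.ext h ((hfiber w).trans (hfiber w').symm)))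
  have hgσ (w : W) : g (w, y0) = (σ w, y0) := Prod.ext rfl (hfiber w)
  refine ⟨σ, fun f hf ⟨a, b⟩ => ?_, hgσ⟩
  simpa [wreathFiberRel, hgσ] using hg _ (fiber_mem_wreathRels hf) ((a, y0), (b, y0))

theorem isAutOrbitals_right_of_wreathRels (h : IsAutOrbitals (wreathRels S1 S2)) :
    IsAutOrbitals S2.rels := by
  obtain ⟨⟨⟨w0, y0⟩, -⟩, -⟩ := h _ (fiber_mem_wreathRels S1.diag_mem)
  intro s hs
  by_cases hd : s = schemeDiag Y
  · subst hd
    refine ⟨(y0, y0), subset_antisymm ?_ (orbit_autGroup_subset hs rfl)⟩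
    rintro ⟨y, z⟩ (rfl : y = z)
    have hdiag := fiber_mem_wreathRels (S2 := S2) S1.diag_mem
    rw [wreathFiberRel_schemeDiag] at hdiag
    obtain ⟨g, hg, hgy⟩ := h.exists_apply_eq hdiag (w0, y0) (w0, y)
    obtain ⟨τ, hτ, hgτ⟩ := exists_snd_apply_eq_of_mem_autGroup hg w0
    have hτy : τ y0 = y := by rw [← hgτ (w0, y0), hgy]
    exact mem_orbit_subgroup_iff.mpr ⟨τ, hτ, by simp [hτy]⟩
  · obtain ⟨⟨⟨w1, z1⟩, ⟨w2, z2⟩⟩, hp⟩ := h _ (base_mem_wreathRels hs hd)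
    have hz : (z1, z2) ∈ s := (hp ▸ mem_orbit_self _ : _ ∈ wreathBaseRel W s)
    refine ⟨(z1, z2), subset_antisymm ?_ (orbit_autGroup_subset hs hz)⟩
    rintro ⟨t1, t2⟩ ht
    have hwt : ((w0, t1), (w0, t2)) ∈ orbit (autGroup (wreathRels S1 S2)) ((w1, z1), (w2, z2)) :=
      hp ▸ ht
    obtain ⟨g, hg, hgp⟩ := mem_orbit_subgroup_iff.mp hwt
    obtain ⟨τ, hτ, hgτ⟩ := exists_snd_apply_eq_of_mem_autGroup hg w0
    simp only [Prod.smul_mk, Equiv.Perm.smul_def, Prod.mk.injEq] at hgp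
    refine mem_orbit_subgroup_iff.mpr ⟨τ, hτ, ?_⟩
    simp [← hgτ (w1, z1), ← hgτ (w2, z2), hgp]

theorem isAutOrbitals_left_of_wreathRels (h : IsAutOrbitals (wreathRels S1 S2)) :
    IsAutOrbitals S1.rels := by
  intro f hf
  obtain ⟨⟨⟨w1, y⟩, ⟨w2, y'⟩⟩, hp⟩ := h _ (fiber_mem_wreathRels hf)
  obtain ⟨rfl : y = y', hw⟩ := (hp ▸ mem_orbit_self _ : _ ∈ wreathFiberRel Y f)
  refine ⟨(w1, w2), subset_antisymm ?_ (orbit_autGroup_subset hf hw)⟩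
  rintro ⟨u1, u2⟩ hu
  have huy : ((u1, y), (u2, y)) ∈ orbit (autGroup (wreathRels S1 S2)) ((w1, y), (w2, y)) :=
    hp ▸ ⟨rfl, hu⟩
  obtain ⟨g, hg, hgp⟩ := mem_orbit_subgroup_iff.mp huy
  simp only [Prod.smul_mk, Equiv.Perm.smul_def, Prod.mk.injEq] at hgp
  obtain ⟨σ, hσ, hgσ⟩ := exists_apply_eq_of_mem_autGroup hg (w0 := w1) (by rw [hgp.1])
  refine mem_orbit_subgroup_iff.mpr ⟨σ, hσ, ?_⟩
  simpa [hgσ] using hgp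

end WreathBackward

/-- `S1` and `S2` are both schurian iff their wreath product is schurian. -/
theorem stmt16 {W Y : Type*} [Fintype W] [Fintype Y]
    (S1 : AssocScheme W) (S2 : AssocScheme Y)
    (A : AssocScheme (W × Y)) (hA : A.rels = wreathRels S1 S2) :
    (S1.IsSchurian ∧ S2.IsSchurian) ↔ A.IsSchurian := by
  simp only [AssocScheme.isSchurian_iff_isAutOrbitals, hA]
  exact ⟨fun ⟨h1, h2⟩ => isAutOrbitals_wreathRels h1 h2,
    fun h => ⟨isAutOrbitals_left_of_wreathRels h, isAutOrbitals_right_of_wreathRels h⟩⟩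
end
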